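/- Let T_N^* be the maximum of T_N over the admissible simplex and T_∞^* = sup over admissible infinite sequences of T_∞. Then for every N, T_∞^* - ε_N ≤ T_N^* ≤ T_∞^*, where ε_N = ((1-p)^{w+N}/2)[log(1+γB) + p·w·log(1+γB/w)]; consequently lim_{N→∞} T_N^* = T_∞^*, and T_∞^* is finite. -/

import Mathlib

open Real

/-- The finite-horizon throughput functional `T_N` (log base 2), evaluated at a
sequence indexed from 1 (only coordinates `1,…,N` matter). -/
noncomputable def TN (B γ p : ℝ) (w N : ℕ) (ξ : ℕ → ℝ) : ℝ :=
  (∑ k ∈ Finset.Icc 1 w, p ^ 2 * (1 - p) ^ (k - 1) * ((k : ℝ) / 2) *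
      Real.logb 2 (1 + γ * B / k))
  + (∑ j ∈ Finset.Icc 1 N, p * (1 - p) ^ (j + w - 1) * (1 / 2) *
      Real.logb 2 (1 + γ * ξ j))
  + (∑ k ∈ Finset.Icc 1 N, p ^ 2 * (1 - p) ^ (k + w - 1) * ((w : ℝ) / 2) *
      Real.logb 2 (1 + (γ / w) * (B - ∑ j ∈ Finset.Icc 1 k, ξ j)))
  + p * (1 - p) ^ (w + N) * ((w : ℝ) / 2) *
      Real.logb 2 (1 + (γ / w) * (B - ∑ j ∈ Finset.Icc 1 N, ξ j))

/-- The admissible simplex `{ξ : ξ_j ≥ 0, ∑_{j=1}^N ξ_j ≤ B}`, as sequences supported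
on coordinates `1,…,N`. -/
def adm (B : ℝ) (N : ℕ) : Set (ℕ → ℝ) :=
  {ξ | (∀ j, 1 ≤ j → j ≤ N → 0 ≤ ξ j) ∧ (∀ j, j = 0 ∨ N < j → ξ j = 0)
      ∧ ∑ j ∈ Finset.Icc 1 N, ξ j ≤ B}

/-- The infinite-horizon throughput functional `T_∞` (log base 2), at a sequence
indexed from 1. -/
noncomputable def Tinf (B γ p : ℝ) (w : ℕ) (x : ℕ → ℝ) : ℝ :=
  (∑ k ∈ Finset.Icc 1 w, p ^ 2 * (1 - p) ^ (k - 1) * ((k : ℝ) / 2) *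
      Real.logb 2 (1 + γ * B / k))
  + (∑' j : ℕ, p * (1 - p) ^ ((j + 1) + w - 1) * (1 / 2) *
      Real.logb 2 (1 + γ * x (j + 1)))
  + (∑' k : ℕ, p ^ 2 * (1 - p) ^ ((k + 1) + w - 1) * ((w : ℝ) / 2) *
      Real.logb 2 (1 + (γ / w) * (B - ∑ i ∈ Finset.Icc 1 (k + 1), x i)))

/-- Admissible infinite sequences: nonnegative with all partial sums at most `B`. -/
def admInf (B : ℝ) : Set (ℕ → ℝ) :=
  {x | (∀ j, 1 ≤ j → 0 ≤ x j) ∧ ∀ N, ∑ j ∈ Finset.Icc 1 N, x j ≤ B}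

/-! Cutting both series of `Tinf` after `N` terms leaves exactly `TN N` minus its terminal
correction term. For a sequence supported on `1, …, N` the direct tail vanishes and the residual
tail is a geometric series that sums to that correction, so `Tinf = TN N` on the simplex. For an
arbitrary admissible sequence, the tails are dominated by geometric series whose logarithms take
their largest values, which gives `Tinf x ≤ TN N x + ε_N`. Taking suprema gives both inequalities,
and `ε_N → 0`. -/

open Finset Filter Topology

theorem sum_Icc_one_eq_sum_range {M : Type*} [AddCommMonoid M] (f : ℕ → M) (N : ℕ) :
    ∑ j ∈ Icc 1 N, f j = ∑ i ∈ range N, f (i + 1) := by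
  rw [← Ico_add_one_right_eq_Icc, sum_Ico_eq_sum_range, Nat.add_sub_cancel]
  simp only [add_comm 1]

theorem summable_and_tsum_le_of_le_geometric {r C : ℝ} {f : ℕ → ℝ} (hr0 : 0 ≤ r) (hr1 : r < 1)
    (hf0 : ∀ n, 0 ≤ f n) (hf : ∀ n, f n ≤ C * r ^ n) :
    Summable f ∧ ∑' n, f n ≤ C / (1 - r) := by
  have hg : HasSum (fun n ↦ C * r ^ n) (C / (1 - r)) := by
    simpa only [div_eq_mul_inv] using (hasSum_geometric_of_lt_one hr0 hr1).mul_left C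
  have hs : Summable f := Summable.of_nonneg_of_le hf0 hf hg.summable
  exact ⟨hs, hasSum_le hf hs.hasSum hg⟩

theorem csSup_sub_le_csSup {S T : Set ℝ} {ε : ℝ} (hS : BddAbove S) (hT : T.Nonempty)
    (h : ∀ t ∈ T, ∃ s ∈ S, t ≤ s + ε) : sSup T - ε ≤ sSup S := by
  rw [sub_le_iff_le_add]
  refine csSup_le hT fun t ht ↦ ?_
  obtain ⟨s, hs, hts⟩ := h t ht
  exact hts.trans (add_le_add_left (le_csSup hS hs) ε)

theorem logb_one_add_mul_nonneg {b c t : ℝ} (hb : 1 < b) (hc : 0 ≤ c) (ht : 0 ≤ t) :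
    0 ≤ logb b (1 + c * t) :=
  logb_nonneg hb (le_add_of_nonneg_right (mul_nonneg hc ht))

theorem logb_one_add_mul_le {b c s t : ℝ} (hb : 1 < b) (hc : 0 ≤ c) (ht : 0 ≤ t) (hts : t ≤ s) :
    logb b (1 + c * t) ≤ logb b (1 + c * s) :=
  logb_le_logb_of_le hb (by positivity) (by gcongr)

section Admissible

variable {B : ℝ} {N : ℕ} {x : ℕ → ℝ}

theorem sum_Icc_nonneg_of_mem_admInf (hx : x ∈ admInf B) (M : ℕ) :
    0 ≤ ∑ j ∈ Icc 1 M, x j :=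
  sum_nonneg fun j hj ↦ hx.1 j (mem_Icc.1 hj).1

theorem le_of_mem_admInf (hx : x ∈ admInf B) {j : ℕ} (hj : 1 ≤ j) : x j ≤ B :=
  (single_le_sum (fun i hi ↦ hx.1 i (mem_Icc.1 hi).1) (mem_Icc.2 ⟨hj, le_rfl⟩)).trans (hx.2 j)

theorem sum_Icc_eq_of_mem_adm (hx : x ∈ adm B N) {M : ℕ} (hM : N ≤ M) :
    ∑ j ∈ Icc 1 M, x j = ∑ j ∈ Icc 1 N, x j := by
  refine (sum_subset (Icc_subset_Icc_right hM) fun j hj hjN ↦ hx.2.1 j (Or.inr ?_)).symm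
  simp only [mem_Icc] at hj hjN
  omega

theorem adm_subset_admInf : adm B N ⊆ admInf B := by
  intro x hx
  have hnn : ∀ j, 1 ≤ j → 0 ≤ x j := fun j hj ↦
    if hjN : j ≤ N then hx.1 j hj hjN else (hx.2.1 j (Or.inr (not_le.1 hjN))).ge
  refine ⟨hnn, fun M ↦ ?_⟩
  rcases le_total M N with hMN | hNM
  · exact (sum_le_sum_of_subset_of_nonneg (Icc_subset_Icc_right hMN)
      fun j hj _ ↦ hnn j (mem_Icc.1 hj).1).trans hx.2.2
  · exact (sum_Icc_eq_of_mem_adm hx hNM).trans_le hx.2.2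

theorem indicator_mem_adm (hx : x ∈ admInf B) (N : ℕ) :
    (Icc 1 N : Set ℕ).indicator x ∈ adm B N := by
  refine ⟨fun j h1 h2 ↦ ?_, fun j hj ↦ ?_, ?_⟩
  · rw [Set.indicator_of_mem (by simp [h1, h2])]
    exact hx.1 j h1
  · exact Set.indicator_of_notMem (by simp only [coe_Icc, Set.mem_Icc]; omega) x
  · rw [sum_indicator_subset x subset_rfl]
    exact hx.2 N

end Admissible

theorem TN_congr {B γ p : ℝ} {w N : ℕ} {x y : ℕ → ℝ} (h : ∀ j ∈ Icc 1 N, x j = y j) :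
    TN B γ p w N x = TN B γ p w N y := by
  have hS : ∀ k ≤ N, ∑ j ∈ Icc 1 k, x j = ∑ j ∈ Icc 1 k, y j := fun k hk ↦
    sum_congr rfl fun j hj ↦ h j (Icc_subset_Icc_right hk hj)
  unfold TN
  rw [hS N le_rfl]
  congr 2
  · congr 1
    exact sum_congr rfl fun j hj ↦ by rw [h j hj]
  · exact sum_congr rfl fun k hk ↦ by rw [hS k (mem_Icc.1 hk).2]

/- The summands of the two series in `Tinf`. -/
noncomputable def directTerm (γ p : ℝ) (w : ℕ) (x : ℕ → ℝ) (j : ℕ) : ℝ :=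
  p * (1 - p) ^ ((j + 1) + w - 1) * (1 / 2) * logb 2 (1 + γ * x (j + 1))

noncomputable def residualTerm (B γ p : ℝ) (w : ℕ) (x : ℕ → ℝ) (k : ℕ) : ℝ :=
  p ^ 2 * (1 - p) ^ ((k + 1) + w - 1) * ((w : ℝ) / 2) *
    logb 2 (1 + (γ / w) * (B - ∑ i ∈ Icc 1 (k + 1), x i))

theorem Tinf_eq_TN_add_tails {B γ p : ℝ} {w : ℕ} {x : ℕ → ℝ}
    (hd : Summable (directTerm γ p w x)) (hr : Summable (residualTerm B γ p w x)) (N : ℕ) :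
    Tinf B γ p w x = TN B γ p w N x + ∑' j, directTerm γ p w x (j + N)
      + ∑' k, residualTerm B γ p w x (k + N)
      - p * (1 - p) ^ (w + N) * ((w : ℝ) / 2) *
          logb 2 (1 + (γ / w) * (B - ∑ j ∈ Icc 1 N, x j)) := by
  have hTinf : Tinf B γ p w x = _ + tsum (directTerm γ p w x) + tsum (residualTerm B γ p w x) :=
    rfl
  rw [hTinf, TN, sum_Icc_one_eq_sum_range _ N, sum_Icc_one_eq_sum_range _ N,
    ← hd.sum_add_tsum_nat_add N, ← hr.sum_add_tsum_nat_add N]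
  simp only [directTerm, residualTerm]
  ring

noncomputable def truncationError (B γ p : ℝ) (w N : ℕ) : ℝ :=
  (1 - p) ^ (w + N) / 2 * (logb 2 (1 + γ * B) + p * w * logb 2 (1 + γ * B / w))

section Tails

variable {B γ p : ℝ} {w : ℕ} {x : ℕ → ℝ}

theorem directTerm_tail (hγ : 0 ≤ γ) (hp : 0 < p) (hp1 : p < 1) (hx : x ∈ admInf B) (N : ℕ) :
    Summable (fun j ↦ directTerm γ p w x (j + N)) ∧
      ∑' j, directTerm γ p w x (j + N) ≤ (1 - p) ^ (w + N) / 2 * logb 2 (1 + γ * B) := by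
  have hq : 0 ≤ 1 - p := sub_nonneg.2 hp1.le
  have hc : 0 ≤ p * (1 - p) ^ (w + N) / 2 := by positivity
  have h_eq : ∀ j, directTerm γ p w x (j + N) =
      p * (1 - p) ^ (w + N) / 2 * logb 2 (1 + γ * x (j + N + 1)) * (1 - p) ^ j := fun j ↦ by
    rw [directTerm, show j + N + 1 + w - 1 = j + (w + N) by omega, pow_add]
    ring
  have hx0 : ∀ j, 0 ≤ x (j + N + 1) := fun j ↦ hx.1 _ (by omega)
  obtain ⟨hs, hle⟩ := summable_and_tsum_le_of_le_geometric
    (C := p * (1 - p) ^ (w + N) / 2 * logb 2 (1 + γ * B)) hq (sub_lt_self 1 hp)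
    (fun j ↦ h_eq j ▸ mul_nonneg (mul_nonneg hc
      (logb_one_add_mul_nonneg one_lt_two hγ (hx0 j))) (pow_nonneg hq j))
    (fun j ↦ h_eq j ▸ mul_le_mul_of_nonneg_right (mul_le_mul_of_nonneg_left
      (logb_one_add_mul_le one_lt_two hγ (hx0 j) (le_of_mem_admInf hx (by omega))) hc)
      (pow_nonneg hq j))
  refine ⟨hs, hle.trans_eq ?_⟩
  rw [sub_sub_cancel]
  field_simp

theorem residualTerm_tail (hγ : 0 ≤ γ) (hp : 0 < p) (hp1 : p < 1) (hx : x ∈ admInf B) (N : ℕ) :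
    Summable (fun k ↦ residualTerm B γ p w x (k + N)) ∧
      ∑' k, residualTerm B γ p w x (k + N) ≤
        (1 - p) ^ (w + N) / 2 * (p * w * logb 2 (1 + γ * B / w)) := by
  have hq : 0 ≤ 1 - p := sub_nonneg.2 hp1.le
  have hc : 0 ≤ p ^ 2 * (1 - p) ^ (w + N) * ((w : ℝ) / 2) := by positivity
  have hγw : 0 ≤ γ / w := by positivity
  set S : ℕ → ℝ := fun k ↦ B - ∑ i ∈ Icc 1 (k + N + 1), x i
  have h_eq : ∀ k, residualTerm B γ p w x (k + N) =
      p ^ 2 * (1 - p) ^ (w + N) * ((w : ℝ) / 2) * logb 2 (1 + γ / w * S k) * (1 - p) ^ k :=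
    fun k ↦ by
      rw [residualTerm, show k + N + 1 + w - 1 = k + (w + N) by omega, pow_add]
      ring
  have hS0 : ∀ k, 0 ≤ S k := fun k ↦ sub_nonneg.2 (hx.2 _)
  obtain ⟨hs, hle⟩ := summable_and_tsum_le_of_le_geometric
    (C := p ^ 2 * (1 - p) ^ (w + N) * ((w : ℝ) / 2) * logb 2 (1 + γ / w * B)) hq
    (sub_lt_self 1 hp)
    (fun k ↦ h_eq k ▸ mul_nonneg (mul_nonneg hc
      (logb_one_add_mul_nonneg one_lt_two hγw (hS0 k))) (pow_nonneg hq k))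
    (fun k ↦ h_eq k ▸ mul_le_mul_of_nonneg_right (mul_le_mul_of_nonneg_left
      (logb_one_add_mul_le one_lt_two hγw (hS0 k)
        (sub_le_self B (sum_Icc_nonneg_of_mem_admInf hx _))) hc)
      (pow_nonneg hq k))
  refine ⟨hs, hle.trans_eq ?_⟩
  rw [sub_sub_cancel, div_mul_eq_mul_div]
  field_simp

theorem Tinf_le_TN_add_truncationError (hγ : 0 ≤ γ) (hp : 0 < p) (hp1 : p < 1)
    (hx : x ∈ admInf B) (N : ℕ) :
    Tinf B γ p w x ≤ TN B γ p w N x + truncationError B γ p w N := by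
  obtain ⟨hd, hd_le⟩ := directTerm_tail (w := w) hγ hp hp1 hx N
  obtain ⟨hr, hr_le⟩ := residualTerm_tail (w := w) hγ hp hp1 hx N
  have hcorr : 0 ≤ p * (1 - p) ^ (w + N) * ((w : ℝ) / 2) *
      logb 2 (1 + (γ / w) * (B - ∑ j ∈ Icc 1 N, x j)) := by
    have hq : 0 ≤ 1 - p := sub_nonneg.2 hp1.le
    exact mul_nonneg (by positivity)
      (logb_one_add_mul_nonneg one_lt_two (by positivity) (sub_nonneg.2 (hx.2 N)))
  rw [Tinf_eq_TN_add_tails ((summable_nat_add_iff N).1 hd) ((summable_nat_add_iff N).1 hr) N,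
    truncationError, mul_add]
  linarith

theorem Tinf_eq_TN_of_mem_adm (hγ : 0 ≤ γ) (hp : 0 < p) (hp1 : p < 1) {N : ℕ}
    (hx : x ∈ adm B N) : Tinf B γ p w x = TN B γ p w N x := by
  set c := p * (1 - p) ^ (w + N) * ((w : ℝ) / 2) *
    logb 2 (1 + (γ / w) * (B - ∑ j ∈ Icc 1 N, x j))
  have hd : ∀ j, directTerm γ p w x (j + N) = 0 := fun j ↦ by
    simp [directTerm, hx.2.1 (j + N + 1) (Or.inr (by omega))]
  have hr : ∀ k, residualTerm B γ p w x (k + N) = p * (1 - p) ^ k * c := fun k ↦ by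
    rw [residualTerm, sum_Icc_eq_of_mem_adm hx (by omega : N ≤ k + N + 1),
      show k + N + 1 + w - 1 = k + (w + N) by omega, pow_add]
    ring
  have hx' := adm_subset_admInf hx
  rw [Tinf_eq_TN_add_tails
    ((summable_nat_add_iff N).1 (directTerm_tail hγ hp hp1 hx' N).1)
    ((summable_nat_add_iff N).1 (residualTerm_tail hγ hp hp1 hx' N).1) N,
    tsum_congr hd, tsum_zero, tsum_congr hr, tsum_mul_right, tsum_mul_left,
    tsum_geometric_of_lt_one (sub_nonneg.2 hp1.le) (sub_lt_self 1 hp), sub_sub_cancel,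
    mul_inv_cancel₀ hp.ne']
  ring

end Tails

theorem tendsto_truncationError (B γ : ℝ) {p : ℝ} (w : ℕ) (hp : 0 < p) (hp1 : p < 1) :
    Tendsto (truncationError B γ p w) atTop (𝓝 0) := by
  have h := (tendsto_pow_atTop_nhds_zero_of_lt_one (sub_nonneg.2 hp1.le)
    (sub_lt_self 1 hp)).const_mul
      ((1 - p) ^ w / 2 * (logb 2 (1 + γ * B) + p * w * logb 2 (1 + γ * B / w)))
  rw [mul_zero] at h
  refine h.congr fun N ↦ ?_
  rw [truncationError, pow_add]
  ring

theorem TNstar_tendsto_Tinfstar_general (B γ p : ℝ) (w : ℕ) (hB : 0 < B) (hγ : 0 < γ)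
    (hp : 0 < p) (hp1 : p < 1) :
    BddAbove (Tinf B γ p w '' admInf B)
    ∧ (∀ N, 1 ≤ N →
        sSup (Tinf B γ p w '' admInf B)
            - ((1 - p) ^ (w + N) / 2) *
              (Real.logb 2 (1 + γ * B) + p * w * Real.logb 2 (1 + γ * B / w))
          ≤ sSup (TN B γ p w N '' adm B N)
        ∧ sSup (TN B γ p w N '' adm B N) ≤ sSup (Tinf B γ p w '' admInf B))
    ∧ Filter.Tendsto (fun N => sSup (TN B γ p w N '' adm B N)) Filter.atTop
        (nhds (sSup (Tinf B γ p w '' admInf B))) := by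
  have h0 : (0 : ℕ → ℝ) ∈ admInf B := ⟨fun _ _ ↦ le_rfl, fun _ ↦ by simpa using hB.le⟩
  have hbdd : BddAbove (Tinf B γ p w '' admInf B) := by
    refine ⟨TN B γ p w 0 0 + truncationError B γ p w 0, ?_⟩
    rintro _ ⟨x, hx, rfl⟩
    rw [← TN_congr (x := x) (by simp)]
    exact Tinf_le_TN_add_truncationError hγ.le hp hp1 hx 0
  have hsub (N : ℕ) : TN B γ p w N '' adm B N ⊆ Tinf B γ p w '' admInf B := by
    rintro _ ⟨ξ, hξ, rfl⟩
    exact ⟨ξ, adm_subset_admInf hξ, Tinf_eq_TN_of_mem_adm hγ.le hp hp1 hξ⟩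
  have hupper (N : ℕ) : sSup (TN B γ p w N '' adm B N) ≤ sSup (Tinf B γ p w '' admInf B) :=
    csSup_le_csSup hbdd ⟨_, Set.mem_image_of_mem _ (indicator_mem_adm h0 N)⟩ (hsub N)
  have hlower (N : ℕ) : sSup (Tinf B γ p w '' admInf B) - truncationError B γ p w N ≤
      sSup (TN B γ p w N '' adm B N) := by
    refine csSup_sub_le_csSup (hbdd.mono (hsub N)) ⟨_, Set.mem_image_of_mem _ h0⟩ ?_
    rintro _ ⟨x, hx, rfl⟩
    refine ⟨_, Set.mem_image_of_mem _ (indicator_mem_adm hx N), ?_⟩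
    rw [TN_congr fun j hj ↦ Set.indicator_of_mem (mem_coe.2 hj) x]
    exact Tinf_le_TN_add_truncationError hγ.le hp hp1 hx N
  refine ⟨hbdd, fun N _ ↦ ⟨hlower N, hupper N⟩, ?_⟩
  refine tendsto_of_tendsto_of_tendsto_of_le_of_le ?_ tendsto_const_nhds hlower hupper
  simpa using tendsto_const_nhds.sub (tendsto_truncationError B γ w hp hp1)

/-- `T_∞^* - ε_N ≤ T_N^* ≤ T_∞^*` with
`ε_N = ((1-p)^{w+N}/2)[log(1+γB) + p w log(1+γB/w)]`; consequently
`T_N^* → T_∞^*`, and `T_∞^*` is finite (the image of `T_∞` is bounded above). -/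
theorem TNstar_tendsto_Tinfstar (B γ p : ℝ) (w : ℕ) (hB : 0 < B) (hγ : 0 < γ)
    (hw : 1 ≤ w) (hp : 0 < p) (hp1 : p < 1) :
    BddAbove (Tinf B γ p w '' admInf B)
    ∧ (∀ N, 1 ≤ N →
        sSup (Tinf B γ p w '' admInf B)
            - ((1 - p) ^ (w + N) / 2) *
              (Real.logb 2 (1 + γ * B) + p * w * Real.logb 2 (1 + γ * B / w))
          ≤ sSup (TN B γ p w N '' adm B N)
        ∧ sSup (TN B γ p w N '' adm B N) ≤ sSup (Tinf B γ p w '' admInf B))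
    ∧ Filter.Tendsto (fun N => sSup (TN B γ p w N '' adm B N)) Filter.atTop
        (nhds (sSup (Tinf B γ p w '' admInf B))) :=
  TNstar_tendsto_Tinfstar_general B γ p w hB hγ hp hp1
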